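/- Counting confluence of weak reduction: if t →w* u1 with counter c1 = (b1,e1) and t →w* u2 with counter c2 = (b2,e2), then there exist a term t' and counters c̄1, c̄2 such that u1 →w* t' with counter c̄2, u2 →w* t' with counter c̄1, c̄i ≤ ci componentwise-ordered (for i = 1,2), and c1 + c̄2 = c2 + c̄1 (componentwise addition). Here t →w* u with counter (b,e) means t reduces to u in b dB-steps and e steps of kind s! or d!. -/

import Mathlib

/-! # The Bang Calculus Revisited: common definitions.

Terms are represented with de Bruijn indices, so that all the meta-level
substitutions are capture-avoiding by construction. -/

/-- Terms of the λ!-calculus.  `esub t u` is the explicit substitution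
`t[0\u]`: the (anonymous) binder scopes over `t`, not over `u`. -/
inductive Tm : Type
  | var : ℕ → Tm
  | app : Tm → Tm → Tm
  | lam : Tm → Tm
  | bang : Tm → Tm
  | der : Tm → Tm
  | esub : Tm → Tm → Tm
  deriving DecidableEq

namespace Tm

/-- lifting a renaming under a binder -/
def liftR (f : ℕ → ℕ) : ℕ → ℕ
  | 0 => 0
  | k + 1 => f k + 1

/-- renaming of free variables -/
def rename (f : ℕ → ℕ) : Tm → Tm
  | var k => var (f k)
  | app t u => app (rename f t) (rename f u)
  | lam t => lam (rename (liftR f) t)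
  | bang t => bang (rename f t)
  | der t => der (rename f t)
  | esub t u => esub (rename (liftR f) t) (rename f u)

/-- lifting a simultaneous substitution under a binder -/
def liftS (σ : ℕ → Tm) : ℕ → Tm
  | 0 => var 0
  | k + 1 => rename (· + 1) (σ k)

/-- simultaneous (capture-avoiding) substitution -/
def subst (σ : ℕ → Tm) : Tm → Tm
  | var k => σ k
  | app t u => app (subst σ t) (subst σ u)
  | lam t => lam (subst (liftS σ) t)
  | bang t => bang (subst σ t)
  | der t => der (subst σ t)
  | esub t u => esub (subst (liftS σ) t) (subst σ u)

/-- capture-avoiding substitution of `u` for the variable `0` of `t`,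
where the result is placed under `n` extra binders (and `u` already lives
at that depth). -/
def substIn (n : ℕ) (u : Tm) (t : Tm) : Tm :=
  subst (fun k => match k with
    | 0 => u
    | k + 1 => var (k + n)) t

/-- capture-avoiding meta-level substitution `t{0 := u}` -/
def subst0 (u : Tm) (t : Tm) : Tm := substIn 0 u t

/-- plugging a term into a list context `L ::= ◻ | L[x\t]`; the head of the
list is the argument of the outermost explicit substitution. -/
def plug : List Tm → Tm → Tm
  | [], s => s
  | e :: L, s => esub (plug L s) e

/-- the w-size of a term -/
def wsize : Tm → ℕ
  | var _ => 0
  | app t u => 1 + wsize t + wsize u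
  | lam t => 1 + wsize t
  | bang _ => 0
  | der t => 1 + wsize t
  | esub t u => 1 + wsize t + wsize u

end Tm

/-- the names of the three rewriting rules of the λ!-calculus -/
inductive Rule : Type
  | dB | sb | db
  deriving DecidableEq

open Tm in
/-- the three rewriting rules, applied at the root (at a distance) -/
inductive Root : Rule → Tm → Tm → Prop
  | dB (L : List Tm) (t u : Tm) :
      Root .dB (app (plug L (lam t)) u)
               (plug L (esub t (rename (· + L.length) u)))
  | sb (L : List Tm) (t u : Tm) :
      Root .sb (esub t (plug L (bang u))) (plug L (substIn L.length u t))
  | db (L : List Tm) (t : Tm) :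
      Root .db (der (plug L (bang t))) (plug L t)

/-- closure of each rule under weak contexts (no reduction under `bang`) -/
inductive Step : Rule → Tm → Tm → Prop
  | root {r : Rule} {t t' : Tm} : Root r t t' → Step r t t'
  | appL {r t t'} (u : Tm) : Step r t t' → Step r (Tm.app t u) (Tm.app t' u)
  | appR {r u u'} (t : Tm) : Step r u u' → Step r (Tm.app t u) (Tm.app t u')
  | lam {r t t'} : Step r t t' → Step r (Tm.lam t) (Tm.lam t')
  | der {r t t'} : Step r t t' → Step r (Tm.der t) (Tm.der t')
  | esubL {r t t'} (u : Tm) : Step r t t' → Step r (Tm.esub t u) (Tm.esub t' u)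
  | esubR {r u u'} (t : Tm) : Step r u u' → Step r (Tm.esub t u) (Tm.esub t u')

/-- the weak reduction `→w` of the λ!-calculus -/
def StepW (t t' : Tm) : Prop := ∃ r, Step r t t'

/-- counted weak reduction: `RedCnt t (b, e) u` holds iff `t →w* u` using `b`
dB-steps and `e` steps of kind s!/d!. -/
inductive RedCnt : Tm → ℕ × ℕ → Tm → Prop
  | refl (t : Tm) : RedCnt t (0, 0) t
  | db {t t₁ u : Tm} {b e : ℕ} :
      Step .dB t t₁ → RedCnt t₁ (b, e) u → RedCnt t (b + 1, e) u
  | ex {t t₁ u : Tm} {b e : ℕ} :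
      (Step .sb t t₁ ∨ Step .db t t₁) → RedCnt t₁ (b, e) u →
      RedCnt t (b, e + 1) u

mutual
  /-- neutral w-normal terms -/
  inductive NeW : Tm → Prop
    | var (k : ℕ) : NeW (Tm.var k)
    | app {t u : Tm} : NaW t → NoW u → NeW (Tm.app t u)
    | der {t : Tm} : NbW t → NeW (Tm.der t)
    | esub {t u : Tm} : NeW t → NbW u → NeW (Tm.esub t u)
  /-- neutral-abs w-normal terms -/
  inductive NaW : Tm → Prop
    | bang (t : Tm) : NaW (Tm.bang t)
    | ne {t : Tm} : NeW t → NaW t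
    | esub {t u : Tm} : NaW t → NbW u → NaW (Tm.esub t u)
  /-- neutral-bang w-normal terms -/
  inductive NbW : Tm → Prop
    | ne {t : Tm} : NeW t → NbW t
    | lam {t : Tm} : NoW t → NbW (Tm.lam t)
    | esub {t u : Tm} : NbW t → NbW u → NbW (Tm.esub t u)
  /-- w-normal terms -/
  inductive NoW : Tm → Prop
    | na {t : Tm} : NaW t → NoW t
    | nb {t : Tm} : NbW t → NoW t
end

/-- clashes -/
inductive Clash : Tm → Prop
  | appBang (L : List Tm) (t u : Tm) : Clash (Tm.app (Tm.plug L (Tm.bang t)) u)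
  | esubLam (L : List Tm) (t u : Tm) : Clash (Tm.esub t (Tm.plug L (Tm.lam u)))
  | derLam (L : List Tm) (u : Tm) : Clash (Tm.der (Tm.plug L (Tm.lam u)))
  | appLam (L : List Tm) (t u : Tm) : Clash (Tm.app t (Tm.plug L (Tm.lam u)))

/-- `WSub t s` holds iff `t = W⟨s⟩` for some weak context `W` -/
inductive WSub : Tm → Tm → Prop
  | refl (t : Tm) : WSub t t
  | appL {t s : Tm} (u : Tm) : WSub t s → WSub (Tm.app t u) s
  | appR {u s : Tm} (t : Tm) : WSub u s → WSub (Tm.app t u) s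
  | lam {t s : Tm} : WSub t s → WSub (Tm.lam t) s
  | der {t s : Tm} : WSub t s → WSub (Tm.der t) s
  | esubL {t s : Tm} (u : Tm) : WSub t s → WSub (Tm.esub t u) s
  | esubR {u s : Tm} (t : Tm) : WSub u s → WSub (Tm.esub t u) s

/-- weak clash freeness -/
def Wcf (t : Tm) : Prop := ¬ ∃ s, WSub t s ∧ Clash s

mutual
  /-- neutral weak clash free normal terms -/
  inductive NeCF : Tm → Prop
    | var (k : ℕ) : NeCF (Tm.var k)
    | app {t u : Tm} : NeCF t → NaCF u → NeCF (Tm.app t u)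
    | der {t : Tm} : NeCF t → NeCF (Tm.der t)
    | esub {t u : Tm} : NeCF t → NeCF u → NeCF (Tm.esub t u)
  /-- neutral-abs weak clash free normal terms -/
  inductive NaCF : Tm → Prop
    | bang (t : Tm) : NaCF (Tm.bang t)
    | ne {t : Tm} : NeCF t → NaCF t
    | esub {t u : Tm} : NaCF t → NeCF u → NaCF (Tm.esub t u)
  /-- neutral-bang weak clash free normal terms -/
  inductive NbCF : Tm → Prop
    | ne {t : Tm} : NeCF t → NbCF t
    | lam {t : Tm} : NoCF t → NbCF (Tm.lam t)
    | esub {t u : Tm} : NbCF t → NeCF u → NbCF (Tm.esub t u)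
  /-- weak clash free normal terms -/
  inductive NoCF : Tm → Prop
    | na {t : Tm} : NaCF t → NoCF t
    | nb {t : Tm} : NbCF t → NoCF t
end

/-- Types of system 𝒰: base types, multiset types and arrow types.  A
multiset type is given by a list of types (a representative of the multiset
it determines). -/
inductive Ty : Type
  | base : ℕ → Ty
  | mult : List Ty → Ty
  | arr : List Ty → Ty → Ty

/-- typing contexts: functions from (de Bruijn) variables to multiset types -/
abbrev Ctx := ℕ → Multiset Ty

/-- the context mapping `k` to `M` and anything else to the empty multiset -/
def Ctx.single (k : ℕ) (M : Multiset Ty) : Ctx := fun j => if j = k then M else 0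

/-- removing the (type of the) bound variable `0` from a context -/
def Ctx.tail (Γ : Ctx) : Ctx := fun k => Γ (k + 1)

/-- extending a context with a multiset type for a fresh variable `0` -/
def Ctx.cons (M : Multiset Ty) (Γ : Ctx) : Ctx := fun k =>
  match k with
  | 0 => M
  | k + 1 => Γ k

/-- Sized typing of system 𝒰: `DerU Γ t τ n` means that there is a derivation
of `Γ ⊢ t : τ` whose size (number of rules, not counting `bg`) is `n`. -/
inductive DerU : Ctx → Tm → Ty → ℕ → Prop
  | ax (k : ℕ) (σ : Ty) : DerU (Ctx.single k {σ}) (Tm.var k) σ 1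
  | app {Γ Δ : Ctx} {t u : Tm} {M : List Ty} {τ : Ty} {n m : ℕ} :
      DerU Γ t (Ty.arr M τ) n → DerU Δ u (Ty.mult M) m →
      DerU (Γ + Δ) (Tm.app t u) τ (n + m + 1)
  | abs {Γ : Ctx} {t : Tm} {τ : Ty} {n : ℕ} (M : List Ty) :
      DerU Γ t τ n → Multiset.ofList M = Γ 0 →
      DerU (Ctx.tail Γ) (Tm.lam t) (Ty.arr M τ) (n + 1)
  | es {Γ Δ : Ctx} {t u : Tm} {σ : Ty} {M : List Ty} {n m : ℕ} :
      DerU Γ t σ n → DerU Δ u (Ty.mult M) m → Multiset.ofList M = Γ 0 →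
      DerU (Ctx.tail Γ + Δ) (Tm.esub t u) σ (n + m + 1)
  | bg {t : Tm} (prs : List (Ctx × Ty × ℕ)) :
      (∀ p ∈ prs, DerU p.1 t p.2.1 p.2.2) →
      DerU ((prs.map (·.1)).sum) (Tm.bang t)
           (Ty.mult (prs.map (·.2.1))) ((prs.map (·.2.2)).sum)
  | dr {Γ : Ctx} {t : Tm} {σ : Ty} {n : ℕ} :
      DerU Γ t (Ty.mult [σ]) n → DerU Γ (Tm.der t) σ (n + 1)

/-! ## The source λ-calculus with explicit substitutions (CBN / CBV) -/

/-- terms of the λ-calculus with explicit substitutions (de Bruijn) -/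
inductive Lm : Type
  | var : ℕ → Lm
  | app : Lm → Lm → Lm
  | lam : Lm → Lm
  | esub : Lm → Lm → Lm
  deriving DecidableEq

namespace Lm

def liftR (f : ℕ → ℕ) : ℕ → ℕ
  | 0 => 0
  | k + 1 => f k + 1

def rename (f : ℕ → ℕ) : Lm → Lm
  | var k => var (f k)
  | app t u => app (rename f t) (rename f u)
  | lam t => lam (rename (liftR f) t)
  | esub t u => esub (rename (liftR f) t) (rename f u)

def liftS (σ : ℕ → Lm) : ℕ → Lm
  | 0 => var 0
  | k + 1 => rename (· + 1) (σ k)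

def subst (σ : ℕ → Lm) : Lm → Lm
  | var k => σ k
  | app t u => app (subst σ t) (subst σ u)
  | lam t => lam (subst (liftS σ) t)
  | esub t u => esub (subst (liftS σ) t) (subst σ u)

def substIn (n : ℕ) (u : Lm) (t : Lm) : Lm :=
  subst (fun k => match k with
    | 0 => u
    | k + 1 => var (k + n)) t

/-- capture-avoiding meta-level substitution `t{0 := u}` -/
def subst0 (u : Lm) (t : Lm) : Lm := substIn 0 u t

def plug : List Lm → Lm → Lm
  | [], s => s
  | e :: L, s => esub (plug L s) e

/-- values -/
def IsVal : Lm → Prop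
  | var _ => True
  | lam _ => True
  | _ => False

/-- the n-size of a term -/
def nsize : Lm → ℕ
  | var _ => 0
  | lam t => 1 + nsize t
  | app t _ => 1 + nsize t
  | esub t _ => 1 + nsize t

/-- the v-size of a term -/
def vsize : Lm → ℕ
  | var _ => 0
  | lam _ => 0
  | app t u => 1 + vsize t + vsize u
  | esub t u => 1 + vsize t + vsize u

end Lm

/-- names of the CBN rules -/
inductive NRule : Type
  | dB | s
  deriving DecidableEq

/-- call-by-name reduction (closure of dB and s under CBN contexts) -/
inductive StepN : NRule → Lm → Lm → Prop
  | dB (L : List Lm) (t u : Lm) :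
      StepN .dB (Lm.app (Lm.plug L (Lm.lam t)) u)
                (Lm.plug L (Lm.esub t (Lm.rename (· + L.length) u)))
  | s (t u : Lm) : StepN .s (Lm.esub t u) (Lm.subst0 u t)
  | appL {r t t'} (u : Lm) : StepN r t t' → StepN r (Lm.app t u) (Lm.app t' u)
  | lam {r t t'} : StepN r t t' → StepN r (Lm.lam t) (Lm.lam t')
  | esubL {r t t'} (u : Lm) : StepN r t t' → StepN r (Lm.esub t u) (Lm.esub t' u)

/-- names of the CBV rules -/
inductive VRule : Type
  | dB | sv
  deriving DecidableEq

/-- call-by-value reduction (closure of dB and sv under CBV contexts) -/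
inductive StepV : VRule → Lm → Lm → Prop
  | dB (L : List Lm) (t u : Lm) :
      StepV .dB (Lm.app (Lm.plug L (Lm.lam t)) u)
                (Lm.plug L (Lm.esub t (Lm.rename (· + L.length) u)))
  | sv (L : List Lm) (t v : Lm) (hv : Lm.IsVal v) :
      StepV .sv (Lm.esub t (Lm.plug L v)) (Lm.plug L (Lm.substIn L.length v t))
  | appL {r t t'} (u : Lm) : StepV r t t' → StepV r (Lm.app t u) (Lm.app t' u)
  | appR {r u u'} (t : Lm) : StepV r u u' → StepV r (Lm.app t u) (Lm.app t u')
  | esubL {r t t'} (u : Lm) : StepV r t t' → StepV r (Lm.esub t u) (Lm.esub t' u)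
  | esubR {r u u'} (t : Lm) : StepV r u u' → StepV r (Lm.esub t u) (Lm.esub t u')

mutual
  /-- CBN neutral terms -/
  inductive NeN : Lm → Prop
    | var (k : ℕ) : NeN (Lm.var k)
    | app {t : Lm} (u : Lm) : NeN t → NeN (Lm.app t u)
  /-- CBN normal terms -/
  inductive NoN : Lm → Prop
    | lam {t : Lm} : NoN t → NoN (Lm.lam t)
    | ne {t : Lm} : NeN t → NoN t
end

mutual
  /-- CBV (substituted) variables -/
  inductive VrV : Lm → Prop
    | var (k : ℕ) : VrV (Lm.var k)
    | esub {t u : Lm} : VrV t → NeV u → VrV (Lm.esub t u)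
  /-- CBV neutral terms -/
  inductive NeV : Lm → Prop
    | app₁ {t u : Lm} : VrV t → NoV u → NeV (Lm.app t u)
    | app₂ {t u : Lm} : NeV t → NoV u → NeV (Lm.app t u)
    | esub {t u : Lm} : NeV t → NeV u → NeV (Lm.esub t u)
  /-- CBV normal terms -/
  inductive NoV : Lm → Prop
    | lam (t : Lm) : NoV (Lm.lam t)
    | vr {t : Lm} : VrV t → NoV t
    | ne {t : Lm} : NeV t → NoV t
    | esub {t u : Lm} : NoV t → NeV u → NoV (Lm.esub t u)
end

/-- counted CBN reduction, recording the number of dB- and s-steps -/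
inductive RedCntN : Lm → ℕ × ℕ → Lm → Prop
  | refl (t : Lm) : RedCntN t (0, 0) t
  | db {t t₁ u : Lm} {b e : ℕ} :
      StepN .dB t t₁ → RedCntN t₁ (b, e) u → RedCntN t (b + 1, e) u
  | s {t t₁ u : Lm} {b e : ℕ} :
      StepN .s t t₁ → RedCntN t₁ (b, e) u → RedCntN t (b, e + 1) u

/-- counted CBV reduction, recording the number of dB- and sv-steps -/
inductive RedCntV : Lm → ℕ × ℕ → Lm → Prop
  | refl (t : Lm) : RedCntV t (0, 0) t
  | db {t t₁ u : Lm} {b e : ℕ} :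
      StepV .dB t t₁ → RedCntV t₁ (b, e) u → RedCntV t (b + 1, e) u
  | sv {t t₁ u : Lm} {b e : ℕ} :
      StepV .sv t t₁ → RedCntV t₁ (b, e) u → RedCntV t (b, e + 1) u

/-- the CBN embedding into the λ!-calculus -/
def cbn : Lm → Tm
  | .var k => .var k
  | .lam t => .lam (cbn t)
  | .app t u => .app (cbn t) (.bang (cbn u))
  | .esub t u => .esub (cbn t) (.bang (cbn u))

/-- `deBang t = some s'` iff `t = L⟨!s⟩` and `s' = L⟨s⟩` -/
def deBang : Tm → Option Tm
  | .bang s => some s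
  | .esub t e => (deBang t).map (fun s => Tm.esub s e)
  | _ => none

/-- the CBV embedding into the λ!-calculus -/
def cbv : Lm → Tm
  | .var k => .bang (.var k)
  | .lam t => .bang (.lam (cbv t))
  | .app t u =>
      match deBang (cbv t) with
      | some r => Tm.app r (cbv u)
      | none => Tm.app (.der (cbv t)) (cbv u)
  | .esub t u => .esub (cbv t) (cbv u)

/-- Sized typing of system 𝒩 (call-by-name): `DerN Γ t τ n` means that there
is a derivation of `Γ ⊢ t : τ` of size `n` (counting all rules). -/
inductive DerN : Ctx → Lm → Ty → ℕ → Prop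
  | ax (k : ℕ) (σ : Ty) : DerN (Ctx.single k {σ}) (Lm.var k) σ 1
  | app {Γ : Ctx} {t u : Lm} {τ : Ty} {n : ℕ} (prs : List (Ctx × Ty × ℕ)) :
      DerN Γ t (Ty.arr (prs.map (·.2.1)) τ) n →
      (∀ p ∈ prs, DerN p.1 u p.2.1 p.2.2) →
      DerN (Γ + (prs.map (·.1)).sum) (Lm.app t u) τ
           (n + (prs.map (·.2.2)).sum + 1)
  | abs {Γ : Ctx} {t : Lm} {τ : Ty} {n : ℕ} (M : List Ty) :
      DerN Γ t τ n → Multiset.ofList M = Γ 0 →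
      DerN (Ctx.tail Γ) (Lm.lam t) (Ty.arr M τ) (n + 1)
  | es {Γ : Ctx} {t u : Lm} {τ : Ty} {n : ℕ} (prs : List (Ctx × Ty × ℕ)) :
      DerN Γ t τ n →
      Multiset.ofList (prs.map (·.2.1)) = Γ 0 →
      (∀ p ∈ prs, DerN p.1 u p.2.1 p.2.2) →
      DerN (Ctx.tail Γ + (prs.map (·.1)).sum) (Lm.esub t u) τ
           (n + (prs.map (·.2.2)).sum + 1)

/-- Sized typing of system 𝒱 (call-by-value): `DerV Γ t τ n` means that there
is a derivation of `Γ ⊢ t : τ` of size `n` (each rule counts 1, except that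
`ax` counts the cardinal of its multiset and `abs` contributes the sizes of
its premises plus the number of premises). -/
inductive DerV : Ctx → Lm → Ty → ℕ → Prop
  | ax (k : ℕ) (M : List Ty) :
      DerV (Ctx.single k (Multiset.ofList M)) (Lm.var k) (Ty.mult M) M.length
  | es {Γ Δ : Ctx} {t u : Lm} {σ : Ty} {M : List Ty} {n m : ℕ} :
      DerV Γ t σ n → DerV Δ u (Ty.mult M) m → Multiset.ofList M = Γ 0 →
      DerV (Ctx.tail Γ + Δ) (Lm.esub t u) σ (n + m + 1)
  | abs {t : Lm} (prs : List (Ctx × List Ty × Ty × ℕ)) :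
      (∀ p ∈ prs, DerV p.1 t p.2.2.1 p.2.2.2) →
      (∀ p ∈ prs, Multiset.ofList p.2.1 = p.1 0) →
      DerV ((prs.map (fun p => Ctx.tail p.1)).sum) (Lm.lam t)
           (Ty.mult (prs.map (fun p => Ty.arr p.2.1 p.2.2.1)))
           ((prs.map (·.2.2.2)).sum + prs.length)
  | app {Γ Δ : Ctx} {t u : Lm} {M : List Ty} {τ : Ty} {n m : ℕ} :
      DerV Γ t (Ty.mult [Ty.arr M τ]) n → DerV Δ u (Ty.mult M) m →
      DerV (Γ + Δ) (Lm.app t u) τ (n + m + 1)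

/-! Weak steps have the diamond property with the rules swapped: two different coinitial
steps `t →r₁ u₁` and `t →r₂ u₂` close as `u₁ →r₂ v ←r₁ u₂`. Since weak contexts never
enter a `!`, an `s!`-step substitutes the body of a `!` without duplicating or erasing any
redex that the other step could fire; the only delicate overlap is a step inside the list
context `L` of a redex at a distance, which acts on the redex by a substitution. Tiling a
counted reduction against one step (strip lemma) and then against another reduction
preserves the number of steps of each rule on opposite sides of every tile, which yields
the counter identity and the bounds. -/

namespace Tm

theorem liftR_comp (f g : ℕ → ℕ) : liftR f ∘ liftR g = liftR (f ∘ g) := by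
  funext k; cases k <;> rfl

theorem rename_rename (f g : ℕ → ℕ) (t : Tm) :
    rename f (rename g t) = rename (f ∘ g) t := by
  induction t generalizing f g <;> simp only [rename, *, liftR_comp, Function.comp_apply]

theorem liftS_comp_liftR (σ : ℕ → Tm) (f : ℕ → ℕ) :
    liftS σ ∘ liftR f = liftS (σ ∘ f) := by
  funext k; cases k <;> rfl

theorem subst_rename (σ : ℕ → Tm) (f : ℕ → ℕ) (t : Tm) :
    subst σ (rename f t) = subst (σ ∘ f) t := by
  induction t generalizing σ f <;>
    simp only [rename, subst, *, liftS_comp_liftR, Function.comp_apply]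

theorem rename_comp_liftS (f : ℕ → ℕ) (σ : ℕ → Tm) :
    rename (liftR f) ∘ liftS σ = liftS (rename f ∘ σ) := by
  funext k
  cases k with
  | zero => rfl
  | succ k =>
    change rename (liftR f) (rename (· + 1) (σ k)) = rename (· + 1) (rename f (σ k))
    rw [rename_rename, rename_rename]
    rfl

theorem rename_subst (f : ℕ → ℕ) (σ : ℕ → Tm) (t : Tm) :
    rename f (subst σ t) = subst (rename f ∘ σ) t := by
  induction t generalizing σ f <;>
    simp only [rename, subst, *, rename_comp_liftS, Function.comp_apply]

theorem subst_comp_liftS (τ σ : ℕ → Tm) :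
    subst (liftS τ) ∘ liftS σ = liftS (subst τ ∘ σ) := by
  funext k
  cases k with
  | zero => rfl
  | succ k =>
    change subst (liftS τ) (rename (· + 1) (σ k)) = rename (· + 1) (subst τ (σ k))
    rw [subst_rename, rename_subst]
    rfl

theorem subst_subst (τ σ : ℕ → Tm) (t : Tm) :
    subst τ (subst σ t) = subst (subst τ ∘ σ) t := by
  induction t generalizing σ τ <;> simp only [subst, *, subst_comp_liftS, Function.comp_apply]

theorem liftS_var_comp (f : ℕ → ℕ) : liftS (var ∘ f) = var ∘ liftR f := by
  funext k; cases k <;> rfl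

theorem rename_eq_subst (f : ℕ → ℕ) (t : Tm) : rename f t = subst (var ∘ f) t := by
  induction t generalizing f <;> simp only [rename, subst, *, liftS_var_comp, Function.comp_apply]

theorem liftS_var : liftS var = var := by
  funext k; cases k <;> rfl

@[simp] theorem subst_var (t : Tm) : subst var t = t := by
  induction t <;> simp only [subst, *, liftS_var]

theorem rename_id (t : Tm) : rename id t = t := by
  rw [rename_eq_subst]; exact subst_var t

theorem plug_append (L₁ L₂ : List Tm) (c : Tm) :
    plug (L₁ ++ L₂) c = plug L₁ (plug L₂ c) := by
  induction L₁ with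
  | nil => rfl
  | cons e L ih => simp only [List.cons_append, plug, ih]

theorem plug_eq_plug {L L' : List Tm} {c c' : Tm}
    (hc : ∀ a b, c ≠ esub a b) (hc' : ∀ a b, c' ≠ esub a b)
    (h : plug L c = plug L' c') : L = L' ∧ c = c' := by
  induction L generalizing L' with
  | nil =>
    cases L' with
    | nil => exact ⟨rfl, h⟩
    | cons e M => exact absurd h (hc _ _)
  | cons e M ih =>
    cases L' with
    | nil => exact absurd h.symm (hc' _ _)
    | cons e' M' =>
      obtain ⟨h₁, rfl⟩ := esub.inj h
      obtain ⟨rfl, rfl⟩ := ih h₁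
      exact ⟨rfl, rfl⟩

def substL (σ : ℕ → Tm) : List Tm → List Tm
  | [] => []
  | e :: L => subst σ e :: substL (liftS σ) L

@[simp] theorem length_substL (σ : ℕ → Tm) (L : List Tm) :
    (substL σ L).length = L.length := by
  induction L generalizing σ <;> simp [substL, *]

theorem subst_plug (σ : ℕ → Tm) (L : List Tm) (c : Tm) :
    subst σ (plug L c) = plug (substL σ L) (subst (liftS^[L.length] σ) c) := by
  induction L generalizing σ with
  | nil => rfl
  | cons e L ih =>
    simp only [plug, subst, substL, ih, List.length_cons, Function.iterate_succ_apply]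

theorem iterate_liftS_add (n : ℕ) (σ : ℕ → Tm) (k : ℕ) :
    liftS^[n] σ (k + n) = rename (· + n) (σ k) := by
  induction n generalizing σ k with
  | zero => exact (rename_id _).symm
  | succ n ih =>
    rw [Function.iterate_succ_apply, show k + (n + 1) = (k + 1) + n by omega, ih]
    change rename (· + n) (rename (· + 1) (σ k)) = _
    rw [rename_rename]
    congr 1
    funext j
    simp only [Function.comp, Nat.add_assoc, Nat.add_comm 1 n]

theorem subst_iterate_liftS_rename (σ : ℕ → Tm) (n : ℕ) (v : Tm) :
    subst (liftS^[n] σ) (rename (· + n) v) = rename (· + n) (subst σ v) := by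
  rw [subst_rename, rename_subst]
  exact congrArg (subst · v) (funext fun k => iterate_liftS_add n σ k)

def substInFn (n : ℕ) (u : Tm) : ℕ → Tm
  | 0 => u
  | k + 1 => var (k + n)

theorem substIn_eq_subst (n : ℕ) (u t : Tm) : substIn n u t = subst (substInFn n u) t := rfl

theorem subst_substIn_of_shift {τ σ : ℕ → Tm} {n m : ℕ}
    (h : ∀ k, τ (k + n) = rename (· + m) (σ k)) (w a : Tm) :
    subst τ (substIn n w a) = substIn m (subst τ w) (subst (liftS σ) a) := by
  rw [substIn_eq_subst, substIn_eq_subst, subst_subst, subst_subst]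
  refine congrArg (subst · a) (funext fun k => ?_)
  cases k with
  | zero => rfl
  | succ k =>
    change τ (k + n) = subst (substInFn m (subst τ w)) (rename (· + 1) (σ k))
    rw [h, subst_rename, rename_eq_subst]
    rfl

end Tm

open Tm

theorem Root.subst {r : Rule} {t t' : Tm} (σ : ℕ → Tm) (h : Root r t t') :
    Root r (t.subst σ) (t'.subst σ) := by
  cases h with
  | dB L a u =>
    have hu := subst_iterate_liftS_rename σ L.length u
    simp only [Tm.subst, subst_plug] at hu ⊢
    rw [hu, ← length_substL σ L]
    exact Root.dB _ _ _
  | sb L a u =>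
    simp only [Tm.subst, subst_plug, subst_substIn_of_shift (iterate_liftS_add L.length σ)]
    rw [← length_substL σ L]
    exact Root.sb _ _ _
  | db L a =>
    simp only [Tm.subst, subst_plug]
    exact Root.db _ _

theorem Step.subst {r : Rule} {t t' : Tm} (σ : ℕ → Tm) (h : Step r t t') :
    Step r (t.subst σ) (t'.subst σ) := by
  induction h generalizing σ with
  | root h => exact root (h.subst σ)
  | appL _ _ ih => exact appL _ (ih σ)
  | appR _ _ ih => exact appR _ (ih σ)
  | lam _ ih => exact lam (ih _)
  | der _ ih => exact der (ih σ)
  | esubL _ _ ih => exact esubL _ (ih _)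
  | esubR _ _ ih => exact esubR _ (ih σ)

theorem Step.rename {r : Rule} {t t' : Tm} (f : ℕ → ℕ) (h : Step r t t') :
    Step r (t.rename f) (t'.rename f) := by
  rw [rename_eq_subst, rename_eq_subst]
  exact h.subst _

theorem Step.plug {r : Rule} {t t' : Tm} (L : List Tm) (h : Step r t t') :
    Step r (plug L t) (plug L t') := by
  induction L with
  | nil => exact h
  | cons e L ih => exact esubL e ih

theorem Step.not_bang {r : Rule} {u X : Tm} : ¬ Step r (bang u) X := by
  rintro (⟨⟨⟩⟩)

theorem Root.app_inv {r : Rule} {A u X : Tm} (h : Root r (app A u) X) :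
    r = .dB ∧ ∃ L s, A = plug L (lam s) ∧ X = plug L (esub s (u.rename (· + L.length))) := by
  cases h with
  | dB L s u => exact ⟨rfl, L, s, rfl, rfl⟩

theorem Root.esub_inv {r : Rule} {A e X : Tm} (h : Root r (esub A e) X) :
    r = .sb ∧ ∃ L w, e = plug L (bang w) ∧ X = plug L (substIn L.length w A) := by
  cases h with
  | sb L a w => exact ⟨rfl, L, w, rfl, rfl⟩

theorem Root.der_inv {r : Rule} {A X : Tm} (h : Root r (der A) X) :
    r = .db ∧ ∃ L w, A = plug L (bang w) ∧ X = plug L w := by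
  cases h with
  | db L w => exact ⟨rfl, L, w, rfl, rfl⟩

theorem Root.unique {r r' : Rule} {t u u' : Tm} (h : Root r t u) (h' : Root r' t u') :
    r = r' ∧ u = u' := by
  cases h with
  | dB L a b =>
    obtain ⟨rfl, L', s', hA, rfl⟩ := h'.app_inv
    obtain ⟨rfl, ⟨⟩⟩ := plug_eq_plug (by simp) (by simp) hA
    exact ⟨rfl, rfl⟩
  | sb L a b =>
    obtain ⟨rfl, L', w', hA, rfl⟩ := h'.esub_inv
    obtain ⟨rfl, ⟨⟩⟩ := plug_eq_plug (by simp) (by simp) hA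
    exact ⟨rfl, rfl⟩
  | db L a =>
    obtain ⟨rfl, L', w', hA, rfl⟩ := h'.der_inv
    obtain ⟨rfl, ⟨⟩⟩ := plug_eq_plug (by simp) (by simp) hA
    exact ⟨rfl, rfl⟩

/-- A step inside the list context `L` itself; `τ` is its effect on the hole, nontrivial when
an `s!`-redex of `L` substitutes into everything plugged under it. -/
structure ContextStep (r : Rule) (L M : List Tm) (τ : ℕ → Tm) : Prop where
  step : ∀ b, Step r (plug L b) (plug M (b.subst τ))
  shift : ∀ k, τ (k + L.length) = var (k + M.length)

theorem ContextStep.of_step_head {r : Rule} {e e' : Tm} (L : List Tm) (h : Step r e e') :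
    ContextStep r (e :: L) (e' :: L) var where
  step b := by simpa only [plug, subst_var] using Step.esubR (plug L b) h
  shift _ := rfl

theorem ContextStep.cons {r : Rule} {L M : List Tm} {τ : ℕ → Tm} (e : Tm)
    (h : ContextStep r L M τ) : ContextStep r (e :: L) (e :: M) τ where
  step b := Step.esubL e (h.step b)
  shift k := by
    simpa only [List.length_cons, Nat.add_right_comm, Nat.add_assoc] using h.shift (k + 1)

theorem ContextStep.sb (L' L : List Tm) (w : Tm) :
    ContextStep .sb (plug L' (bang w) :: L) (L' ++ substL (substInFn L'.length w) L)
      (liftS^[L.length] (substInFn L'.length w)) where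
  step b := by
    simpa only [plug, substIn_eq_subst, subst_plug, plug_append] using
      Step.root (Root.sb L' (plug L b) w)
  shift k := by
    rw [List.length_cons, ← Nat.add_assoc, Nat.add_right_comm, iterate_liftS_add]
    simp only [substInFn, Tm.rename, List.length_append, length_substL, Nat.add_assoc]

theorem Step.plug_inv {r : Rule} {c : Tm} {L : List Tm} {X : Tm}
    (h : Step r (Tm.plug L c) X) :
    (∃ c', Step r c c' ∧ X = Tm.plug L c') ∨
      ∃ M τ, ContextStep r L M τ ∧ X = Tm.plug M (c.subst τ) := by
  induction L generalizing X with
  | nil => exact .inl ⟨X, h, rfl⟩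
  | cons e L ih =>
    cases h with
    | root h =>
      obtain ⟨rfl, L', w, rfl, rfl⟩ := h.esub_inv
      exact .inr ⟨_, _, .sb L' L w, by rw [substIn_eq_subst, subst_plug, plug_append]⟩
    | esubL _ h =>
      rcases ih h with ⟨c', hc, rfl⟩ | ⟨M, τ, hL, rfl⟩
      · exact .inl ⟨c', hc, rfl⟩
      · exact .inr ⟨e :: M, τ, hL.cons e, rfl⟩
    | esubR _ h => exact .inr ⟨_, var, .of_step_head L h, by rw [subst_var]; rfl⟩

theorem ContextStep.subst_rename {r : Rule} {L M : List Tm} {τ : ℕ → Tm}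
    (h : ContextStep r L M τ) (v : Tm) :
    (v.rename (· + L.length)).subst τ = v.rename (· + M.length) := by
  rw [Tm.subst_rename, rename_eq_subst]
  exact congrArg (Tm.subst · v) (funext h.shift)

theorem ContextStep.subst_substIn {r : Rule} {L M : List Tm} {τ : ℕ → Tm}
    (h : ContextStep r L M τ) (w a : Tm) :
    (substIn L.length w a).subst τ = substIn M.length (w.subst τ) a := by
  rw [subst_substIn_of_shift (σ := var) h.shift, liftS_var, subst_var]

def SwapJoinable (r₁ : Rule) (u₁ : Tm) (r₂ : Rule) (u₂ : Tm) : Prop :=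
  (r₁ = r₂ ∧ u₁ = u₂) ∨ ∃ v, Step r₂ u₁ v ∧ Step r₁ u₂ v

theorem SwapJoinable.symm {r₁ r₂ : Rule} {u₁ u₂ : Tm} :
    SwapJoinable r₁ u₁ r₂ u₂ → SwapJoinable r₂ u₂ r₁ u₁
  | .inl ⟨hr, hu⟩ => .inl ⟨hr.symm, hu.symm⟩
  | .inr ⟨v, h₁, h₂⟩ => .inr ⟨v, h₂, h₁⟩

theorem SwapJoinable.map {r₁ r₂ : Rule} {u₁ u₂ : Tm} (f : Tm → Tm)
    (hf : ∀ {r a b}, Step r a b → Step r (f a) (f b)) :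
    SwapJoinable r₁ u₁ r₂ u₂ → SwapJoinable r₁ (f u₁) r₂ (f u₂)
  | .inl ⟨hr, hu⟩ => .inl ⟨hr, congrArg f hu⟩
  | .inr ⟨v, h₁, h₂⟩ => .inr ⟨f v, hf h₁, hf h₂⟩

theorem Root.swapJoinable {r₁ r₂ : Rule} {t u₁ u₂ : Tm} (h₁ : Root r₁ t u₁)
    (h₂ : Step r₂ t u₂) : SwapJoinable r₁ u₁ r₂ u₂ := by
  cases h₁ with
  | dB L s u =>
    cases h₂ with
    | root h₂ => exact .inl ((Root.dB L s u).unique h₂)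
    | appL _ h₂ =>
      rcases h₂.plug_inv with ⟨_, hc, rfl⟩ | ⟨M, τ, hL, rfl⟩
      · cases hc with
        | root h => cases h
        | lam hs => exact .inr ⟨_, (Step.esubL _ hs).plug L, .root (.dB L _ u)⟩
      · refine .inr ⟨_, hL.step (esub s (u.rename (· + L.length))), ?_⟩
        simp only [Tm.subst, hL.subst_rename]
        exact .root (.dB M _ u)
    | appR _ h₂ => exact .inr ⟨_, (Step.esubR _ (h₂.rename _)).plug L, .root (.dB L s _)⟩
  | sb L a w =>
    cases h₂ with
    | root h₂ => exact .inl ((Root.sb L a w).unique h₂)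
    | esubL _ h₂ => exact .inr ⟨_, (h₂.subst _).plug L, .root (.sb L _ w)⟩
    | esubR _ h₂ =>
      rcases h₂.plug_inv with ⟨_, hc, -⟩ | ⟨M, τ, hL, rfl⟩
      · exact absurd hc Step.not_bang
      · refine .inr ⟨_, hL.step (substIn L.length w a), ?_⟩
        rw [hL.subst_substIn]
        exact .root (.sb M a _)
  | db L w =>
    cases h₂ with
    | root h₂ => exact .inl ((Root.db L w).unique h₂)
    | der h₂ =>
      rcases h₂.plug_inv with ⟨_, hc, -⟩ | ⟨M, τ, hL, rfl⟩
      · exact absurd hc Step.not_bang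
      · exact .inr ⟨_, hL.step w, .root (.db M _)⟩

theorem Step.swapJoinable {r₁ r₂ : Rule} {t u₁ u₂ : Tm} (h₁ : Step r₁ t u₁)
    (h₂ : Step r₂ t u₂) : SwapJoinable r₁ u₁ r₂ u₂ := by
  induction h₁ generalizing u₂ with
  | root h₁ => exact h₁.swapJoinable h₂
  | appL u h₁ ih =>
    cases h₂ with
    | root h₂ => exact (h₂.swapJoinable (.appL u h₁)).symm
    | appL _ h₂ => exact (ih h₂).map _ (.appL u)
    | appR _ h₂ => exact .inr ⟨_, .appR _ h₂, .appL _ h₁⟩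
  | appR t h₁ ih =>
    cases h₂ with
    | root h₂ => exact (h₂.swapJoinable (.appR t h₁)).symm
    | appL _ h₂ => exact .inr ⟨_, .appL _ h₂, .appR _ h₁⟩
    | appR _ h₂ => exact (ih h₂).map _ (.appR t)
  | lam h₁ ih =>
    cases h₂ with
    | root h₂ => cases h₂
    | lam h₂ => exact (ih h₂).map _ .lam
  | der h₁ ih =>
    cases h₂ with
    | root h₂ => exact (h₂.swapJoinable (.der h₁)).symm
    | der h₂ => exact (ih h₂).map _ .der
  | esubL u h₁ ih =>
    cases h₂ with
    | root h₂ => exact (h₂.swapJoinable (.esubL u h₁)).symm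
    | esubL _ h₂ => exact (ih h₂).map _ (.esubL u)
    | esubR _ h₂ => exact .inr ⟨_, .esubR _ h₂, .esubL _ h₁⟩
  | esubR t h₁ ih =>
    cases h₂ with
    | root h₂ => exact (h₂.swapJoinable (.esubR t h₁)).symm
    | esubL _ h₂ => exact .inr ⟨_, .esubL _ h₂, .esubR _ h₁⟩
    | esubR _ h₂ => exact (ih h₂).map _ (.esubR t)

def Rule.cost : Rule → ℕ × ℕ
  | .dB => (1, 0)
  | .sb => (0, 1)
  | .db => (0, 1)

theorem RedCnt.cons {r : Rule} {t t₁ u : Tm} {c : ℕ × ℕ} (h : Step r t t₁)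
    (h' : RedCnt t₁ c u) : RedCnt t (r.cost + c) u := by
  obtain ⟨b, e⟩ := c
  cases r with
  | dB => simpa [Rule.cost, add_comm] using RedCnt.db h h'
  | sb => simpa [Rule.cost, add_comm] using RedCnt.ex (.inl h) h'
  | db => simpa [Rule.cost, add_comm] using RedCnt.ex (.inr h) h'

theorem RedCnt.head_induction_on {motive : ∀ t c u, RedCnt t c u → Prop}
    {t : Tm} {c : ℕ × ℕ} {u : Tm} (h : RedCnt t c u) (refl : ∀ t, motive t 0 t (.refl t))
    (step : ∀ {r t t₁ c u} (hs : Step r t t₁) (h : RedCnt t₁ c u),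
      motive t₁ c u h → motive t (r.cost + c) u (.cons hs h)) :
    motive t c u h := by
  induction h with
  | refl t => exact refl t
  | db hs _ ih => simpa [Rule.cost, add_comm] using step hs _ ih
  | ex hs _ ih =>
    rcases hs with hs | hs
    · simpa [Rule.cost, add_comm] using step hs _ ih
    · simpa [Rule.cost, add_comm] using step hs _ ih

theorem Step.strip {r : Rule} {t u₁ u₂ : Tm} {c : ℕ × ℕ} (h₁ : Step r t u₁)
    (h₂ : RedCnt t c u₂) :
    (∃ c', c = r.cost + c' ∧ RedCnt u₁ c' u₂) ∨ ∃ t', RedCnt u₁ c t' ∧ Step r u₂ t' := by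
  induction h₂ using RedCnt.head_induction_on generalizing u₁ with
  | refl t => exact .inr ⟨u₁, .refl u₁, h₁⟩
  | step hs hr ih =>
    rcases h₁.swapJoinable hs with ⟨rfl, rfl⟩ | ⟨v, hv₁, hv⟩
    · exact .inl ⟨_, rfl, hr⟩
    · rcases ih hv with ⟨c', rfl, hc'⟩ | ⟨t', ht', hstep⟩
      · exact .inl ⟨_, add_left_comm .., .cons hv₁ hc'⟩
      · exact .inr ⟨t', .cons hv₁ ht', hstep⟩

/-- **Counting confluence of weak reduction** (Lemma 3): if `t →w* u₁` with
counter `c₁` and `t →w* u₂` with counter `c₂`, then there exist `t'` and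
counters `d₁ ≤ c₁`, `d₂ ≤ c₂` with `u₁ →w* t'` with counter `d₂`,
`u₂ →w* t'` with counter `d₁`, and `c₁ + d₂ = c₂ + d₁`. -/
theorem counting_confluence {t u₁ u₂ : Tm} {c₁ c₂ : ℕ × ℕ}
    (h₁ : RedCnt t c₁ u₁) (h₂ : RedCnt t c₂ u₂) :
    ∃ (t' : Tm) (d₁ d₂ : ℕ × ℕ),
      RedCnt u₁ d₂ t' ∧ RedCnt u₂ d₁ t' ∧
      d₁ ≤ c₁ ∧ d₂ ≤ c₂ ∧ c₁ + d₂ = c₂ + d₁ := by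
  induction h₁ using RedCnt.head_induction_on generalizing u₂ c₂ with
  | refl t => exact ⟨u₂, 0, c₂, h₂, .refl u₂, le_rfl, le_rfl, by rw [zero_add, add_zero]⟩
  | step hs _ ih =>
    rcases hs.strip h₂ with ⟨c₂', rfl, h₂'⟩ | ⟨t₂, h₂', hstep⟩
    · obtain ⟨t', d₁, d₂, H₁, H₂, hd₁, hd₂, hc⟩ := ih h₂'
      exact ⟨t', d₁, d₂, H₁, H₂, le_add_left hd₁, le_add_left hd₂,
        by rw [add_assoc, add_assoc, hc]⟩
    · obtain ⟨t', d₁, d₂, H₁, H₂, hd₁, hd₂, hc⟩ := ih h₂'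
      exact ⟨t', _ + d₁, d₂, H₁, .cons hstep H₂, add_le_add_right hd₁ _, hd₂,
        by rw [add_assoc, hc, add_left_comm]⟩
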